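/- For a trajectory of the billiard within an ellipse, consecutive segments are tangent to the same conic of the confocal family: if a chord of the ellipse E : x²/a + y²/b = 1 is tangent to the confocal conic C_λ, then the chord obtained by the billiard reflection at the endpoint is also tangent to C_λ. -/

import Mathlib

/-!
The line through `P` with direction `v` is `v₂ x - v₁ y = v₂ p₁ - v₁ p₂`, so the tangency
condition `u²(a-λ) + v²(b-λ) = 1` for `C_λ` says that
`Q_λ(v) = v₂²(a-λ) + v₁²(b-λ) - (v₁ p₂ - v₂ p₁)²` vanishes. For `P` on `E` the
equation of `E` turns `Q_λ` into `a b ⟨v, n⟩² - λ ‖v‖²`, with `n = (p₁/a, p₂/b)` the normal of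
`E` at `P`. Reflection in the tangent line of `E` negates `⟨v, n⟩` and preserves `‖v‖`,
hence preserves `Q_λ`.
-/

theorem ellipse_normal_sq_ne_zero {a b px py : ℝ} (hP : px ^ 2 / a + py ^ 2 / b = 1) :
    (px / a) ^ 2 + (py / b) ^ 2 ≠ 0 := by
  intro h
  obtain ⟨hx, hy⟩ := (add_eq_zero_iff_of_nonneg (sq_nonneg _) (sq_nonneg _)).1 h
  have hP' : px * (px / a) + py * (py / b) = 1 := by rw [← hP]; ring
  rw [pow_eq_zero_iff two_ne_zero |>.1 hx, pow_eq_zero_iff two_ne_zero |>.1 hy] at hP'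
  norm_num at hP'

theorem caustic_defect_eq_of_mem_ellipse {a b px py : ℝ} (ha : a ≠ 0) (hb : b ≠ 0)
    (hP : px ^ 2 / a + py ^ 2 / b = 1) (lam vx vy : ℝ) :
    vy ^ 2 * (a - lam) + vx ^ 2 * (b - lam) - (vx * py - vy * px) ^ 2
      = a * b * (vx * (px / a) + vy * (py / b)) ^ 2 - lam * (vx ^ 2 + vy ^ 2) := by
  linear_combination (norm := field_simp) (-(b * vx ^ 2 + a * vy ^ 2)) * hP
  ring

section Reflection

variable {vx vy nx ny : ℝ}

theorem reflect_inner_normal (hn : nx ^ 2 + ny ^ 2 ≠ 0) :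
    (vx - 2 * ((vx * nx + vy * ny) / (nx ^ 2 + ny ^ 2)) * nx) * nx
      + (vy - 2 * ((vx * nx + vy * ny) / (nx ^ 2 + ny ^ 2)) * ny) * ny
      = -(vx * nx + vy * ny) := by
  field_simp
  ring

theorem reflect_norm_sq (hn : nx ^ 2 + ny ^ 2 ≠ 0) :
    (vx - 2 * ((vx * nx + vy * ny) / (nx ^ 2 + ny ^ 2)) * nx) ^ 2
      + (vy - 2 * ((vx * nx + vy * ny) / (nx ^ 2 + ny ^ 2)) * ny) ^ 2
      = vx ^ 2 + vy ^ 2 := by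
  field_simp
  ring

end Reflection

theorem billiard_reflection_preserves_caustic_general
    (a b lam : ℝ) (hab : b < a) (hb : 0 < b)
    (px py vx vy : ℝ)
    (hP : px ^ 2 / a + py ^ 2 / b = 1)
    (wx wy : ℝ)
    (hwx : wx = vx - 2 * ((vx * (px / a) + vy * (py / b)) /
        ((px / a) ^ 2 + (py / b) ^ 2)) * (px / a))
    (hwy : wy = vy - 2 * ((vx * (px / a) + vy * (py / b)) /
        ((px / a) ^ 2 + (py / b) ^ 2)) * (py / b))
    (htan : vy ^ 2 * (a - lam) + vx ^ 2 * (b - lam) = (vx * py - vy * px) ^ 2) :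
    wy ^ 2 * (a - lam) + wx ^ 2 * (b - lam) = (wx * py - wy * px) ^ 2 := by
  have ha : a ≠ 0 := (hb.trans hab).ne'
  have hn := ellipse_normal_sq_ne_zero hP
  rw [← sub_eq_zero, caustic_defect_eq_of_mem_ellipse ha hb.ne' hP, hwx, hwy,
    reflect_inner_normal hn, neg_sq, reflect_norm_sq hn,
    ← caustic_defect_eq_of_mem_ellipse ha hb.ne' hP, htan, sub_self]

/-- Consecutive segments of a billiard trajectory in the ellipse
`E : x²/a + y²/b = 1` are tangent to the same confocal conic `C_λ`:
if the line through a boundary point `P = (px, py) ∈ E` with direction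
`v = (vx, vy)` satisfies the tangency condition
`v₂²(a−λ) + v₁²(b−λ) = (v₁ p₂ − v₂ p₁)²` for `C_λ`, then so does the line
through `P` with the reflected direction `w = v − 2⟨v, nᵤ⟩nᵤ`, where `nᵤ` is
the unit normal of `E` at `P` (here `w = v − 2⟨v,n⟩n/‖n‖²` with
`n = (px/a, py/b)` the gradient normal). -/
theorem billiard_reflection_preserves_caustic
    (a b lam : ℝ) (hab : b < a) (hb : 0 < b)
    (hl : 0 < lam) (hla : lam ≠ a) (hlb : lam ≠ b)
    (px py vx vy : ℝ)
    (hP : px ^ 2 / a + py ^ 2 / b = 1)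
    (hv : (vx, vy) ≠ (0, 0))
    (wx wy : ℝ)
    (hwx : wx = vx - 2 * ((vx * (px / a) + vy * (py / b)) /
        ((px / a) ^ 2 + (py / b) ^ 2)) * (px / a))
    (hwy : wy = vy - 2 * ((vx * (px / a) + vy * (py / b)) /
        ((px / a) ^ 2 + (py / b) ^ 2)) * (py / b))
    (htan : vy ^ 2 * (a - lam) + vx ^ 2 * (b - lam) = (vx * py - vy * px) ^ 2) :
    wy ^ 2 * (a - lam) + wx ^ 2 * (b - lam) = (wx * py - wy * px) ^ 2 :=
  billiard_reflection_preserves_caustic_general a b lam hab hb px py vx vy hP wx wy hwx hwy htan
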